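/- Let p_k, T, σ > 0 be reals with T ≥ 4σ/p_k, and suppose T_k ≥ T·p_k·(1 − √(2σ/(T·p_k))). Then p_k/√(T_k) ≤ √(p_k/T) + 2√(2σ)/T. -/
import Mathlib


theorem stmt_5 (p T σ Tk : ℝ) (hp : 0 < p) (hp1 : p ≤ 1) (hT : 0 < T) (hσ : 0 < σ)
    (hT4 : T ≥ 4 * σ / p) (hTk : 0 < Tk)
    (hTkge : Tk ≥ T * p * (1 - Real.sqrt (2 * σ / (T * p)))) :
    p / Real.sqrt Tk ≤ Real.sqrt (p / T) + 2 * Real.sqrt (2 * σ) / T := by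
  have hTp : 0 < T * p := by positivity
  set x := Real.sqrt (2 * σ / (T * p)) with hxdef
  set a := Real.sqrt (p / T) with hadef
  set b := Real.sqrt (2 * σ) with hbdef
  set s := Real.sqrt Tk with hsdef
  have hx0 : 0 ≤ x := Real.sqrt_nonneg _
  have ha0 : 0 < a := Real.sqrt_pos.mpr (by positivity)
  have hb0 : 0 < b := Real.sqrt_pos.mpr (by positivity)
  have hs0 : 0 < s := Real.sqrt_pos.mpr hTk
  have hx2 : x ^ 2 = 2 * σ / (T * p) := Real.sq_sqrt (by positivity)
  have ha2 : a ^ 2 = p / T := Real.sq_sqrt (by positivity)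
  have hs2 : s ^ 2 = Tk := Real.sq_sqrt hTk.le
  have h4σ : 4 * σ ≤ T * p := by
    rw [ge_iff_le, div_le_iff₀ hp] at hT4; linarith
  have hxle : x ^ 2 ≤ 1 / 2 := by
    rw [hx2, div_le_iff₀ hTp]; linarith
  have hx1 : x ≤ 1 := by nlinarith
  have hab : x * a = b / T := by
    rw [hxdef, hadef, hbdef, ← Real.sqrt_mul (by positivity)]
    have : 2 * σ / (T * p) * (p / T) = 2 * σ / T ^ 2 := by
      field_simp
    rw [this, Real.sqrt_div (by positivity), Real.sqrt_sq hT.le]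
  rw [div_le_iff₀ hs0]
  have key : p ^ 2 ≤ ((a + 2 * b / T) * s) ^ 2 := by
    have h1 : (a + 2 * b / T) = a * (1 + 2 * x) := by
      have hab' : b = x * a * T := by field_simp at hab; linarith
      rw [hab']; field_simp
    rw [h1]
    have h2 : T * p * (1 - x) ≤ s ^ 2 := by rw [hs2]; exact hTkge
    have h3 : 1 ≤ (1 + 2 * x) ^ 2 * (1 - x) := by nlinarith
    calc p ^ 2 ≤ p ^ 2 * ((1 + 2 * x) ^ 2 * (1 - x)) := by nlinarith [sq_nonneg p]
    _ = (p / T) * (1 + 2 * x) ^ 2 * (T * p * (1 - x)) := by field_simp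
    _ ≤ (p / T) * (1 + 2 * x) ^ 2 * s ^ 2 := by
        apply mul_le_mul_of_nonneg_left h2; positivity
    _ = (a * (1 + 2 * x) * s) ^ 2 := by rw [← ha2]; ring
  nlinarith [key, mul_pos (by positivity : (0:ℝ) < a + 2 * b / T) hs0]
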